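/- arXiv:1409.0830 — 2 statements merged into one kernel-verified Lean document; each statement's English description precedes it below -/
import Mathlib

section
/- Let Rot = [[0,1],[−1,0]], so that Rot·Λ is the set of holonomy vectors of saddle connections of the rotated surface 𝓛^R. For every (a,b) ∈ Ω₂, i.e. 0 < a ≤ 1 and 1 − a < b ≤ 1, the set {w₂/w₁ : w = M_{a,b}·Rot·u for some u ∈ Λ, 0 < w₁ ≤ 1, w₂ > 0} has a least element, and this least element equals 1/(ab). (This is the return time of the horocycle flow on the part Ω₂ of the Poincaré section.) -/
/-!
Every coordinate of a holonomy vector of `𝓛` is `0` or has absolute value at least `1`. Granting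
this, let `u ∈ Λ` with `w = M_{a,b}·Rot·u = (a u₂ - b u₁, -u₁/a)` in the strip. Then `u₁ ≤ -1`;
`u₂ ≥ 1` would give `w₁ ≥ a + b > 1`, so `u₂ ≤ 0`, hence `w₁ ≤ -b u₁` and `w₂ / w₁ ≥ 1/(ab)`.
Equality holds for `u = (-1, 0) = R⁴·(1, 0)`.

The coordinate bound is a ping-pong argument. Write `c = 2 + √2`. The inner cone `0 ≤ x/y ≤ c`
is a fundamental interval for the translation `S`, and `R`, of order four projectively, maps the
outer cone (around the horizontal) into the inner one by its powers `R`, `R²`, `R³`, while any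
`S^n` with `n ≠ 0` maps the inner cone into the outer one. Along such a reduced word the bounds
`|y| ≥ 1` and `x, x - c y ∈ {0} ∪ {|t| ≥ 1}` propagate. After normalising to `y ≥ 1`, each new
coordinate under `R^k` is, up to a factor of modulus at least one, `x`, `x - c y`, or `x - p y`
with `0 < p < c`, and the last is large because `x ≤ 0` or `x ≥ c y`; under `S^n` the new
coordinates are `x + m c y` with `m ∈ ℤ`, large unless `m ∈ {0, -1}`.
-/

open Real Matrix MeasureTheory Filter Set

noncomputable section

abbrev SL2 := Matrix.SpecialLinearGroup (Fin 2) ℝ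

/-- The elliptic generator R of the Veech group of 𝓛. -/
def Rgen : SL2 := ⟨!![1 + Real.sqrt 2, -(2 + Real.sqrt 2); 1, -1], by
  rw [Matrix.det_fin_two_of]; ring⟩

/-- The parabolic generator S of the Veech group of 𝓛. -/
def Sgen : SL2 := ⟨!![1, 2 + Real.sqrt 2; 0, 1], by
  rw [Matrix.det_fin_two_of]; ring⟩

/-- The Veech group Γ of the translation surface 𝓛. -/
def Γ : Subgroup SL2 := Subgroup.closure {Rgen, Sgen}

/-- Linear action of a 2×2 matrix on ℝ². -/
def act (g : Matrix (Fin 2) (Fin 2) ℝ) (v : ℝ × ℝ) : ℝ × ℝ :=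
  (g 0 0 * v.1 + g 0 1 * v.2, g 1 0 * v.1 + g 1 1 * v.2)

/-- The set of holonomy vectors of saddle connections of 𝓛. -/
def Lambda : Set (ℝ × ℝ) :=
  {v | ∃ γ ∈ Γ, v = act (γ : Matrix (Fin 2) (Fin 2) ℝ) (1, 0)} ∪
  {v | ∃ γ ∈ Γ, v = act (γ : Matrix (Fin 2) (Fin 2) ℝ) (1 + Real.sqrt 2, 0)} ∪
  {v | ∃ γ ∈ Γ, v = act (γ : Matrix (Fin 2) (Fin 2) ℝ) (0, 1)} ∪
  {v | ∃ γ ∈ Γ, v = act (γ : Matrix (Fin 2) (Fin 2) ℝ) (0, Real.sqrt 2)}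

/-- The matrix M_{a,b} = [[a,b],[0,a⁻¹]]. -/
def Mmat (a b : ℝ) : Matrix (Fin 2) (Fin 2) ℝ := !![a, b; 0, a⁻¹]

/-- The rotation by π/2 in the clockwise direction; Rot·Λ is the set of holonomy vectors of the
rotated surface 𝓛^R. -/
def Rot : Matrix (Fin 2) (Fin 2) ℝ := !![0, 1; -1, 0]

lemma act_one (v : ℝ × ℝ) : act 1 v = v := by
  simp [act]

lemma act_mul (A B : Matrix (Fin 2) (Fin 2) ℝ) (v : ℝ × ℝ) :
    act (A * B) v = act A (act B v) := by
  simp only [act, mul_apply, Fin.sum_univ_two]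
  ext <;> ring

lemma act_zero (A : Matrix (Fin 2) (Fin 2) ℝ) : act A 0 = 0 := by
  simp [act]

lemma act_add (A : Matrix (Fin 2) (Fin 2) ℝ) (v w : ℝ × ℝ) :
    act A (v + w) = act A v + act A w := by
  simp only [act, Prod.fst_add, Prod.snd_add, Prod.mk_add_mk]
  ext <;> ring

instance : DistribMulAction SL2 (ℝ × ℝ) where
  smul g v := act g v
  one_smul := act_one
  mul_smul g h := act_mul g h
  smul_zero g := act_zero g
  smul_add g := act_add g

lemma smul_eq_act (g : SL2) (v : ℝ × ℝ) : g • v = act g v := rfl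

lemma sqrt_two_mul_self : √2 * √2 = 2 := Real.mul_self_sqrt (by norm_num)

lemma le_sqrt_two_mul {x : ℝ} (hx : 0 ≤ x) : x ≤ √2 * x := by
  nlinarith [Real.one_lt_sqrt_two]

lemma sqrt_two_mul_le {x : ℝ} (hx : x ≤ 0) : √2 * x ≤ x := by
  nlinarith [Real.one_lt_sqrt_two]

lemma sqrt_two_mul_ge_of_le {x y : ℝ} (h : (2 + √2) * y ≤ x) :
    2 * (√2 * y) + 2 * y ≤ √2 * x := by
  have e : √2 * ((2 + √2) * y) = 2 * (√2 * y) + 2 * y := by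
    linear_combination y * sqrt_two_mul_self
  linarith [mul_le_mul_of_nonneg_left h (Real.sqrt_nonneg 2)]

lemma Rgen_smul (v : ℝ × ℝ) :
    Rgen • v = ((1 + √2) * v.1 - (2 + √2) * v.2, v.1 - v.2) := by
  rw [smul_eq_act]
  ext <;> simp [act, Rgen] <;> ring

lemma Rgen_sq_smul (v : ℝ × ℝ) :
    Rgen ^ 2 • v = ((1 + √2) * (v.1 - 2 * v.2), √2 * v.1 - (1 + √2) * v.2) := by
  rw [pow_two, mul_smul, Rgen_smul, Rgen_smul]
  ext
  · linear_combination (v.1 - v.2) * sqrt_two_mul_self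
  · ring

lemma Rgen_pow_three_smul (v : ℝ × ℝ) :
    Rgen ^ 3 • v = (v.1 - (2 + √2) * v.2, v.1 - (1 + √2) * v.2) := by
  rw [pow_succ', mul_smul, Rgen_sq_smul, Rgen_smul]
  ext
  · linear_combination (-v.2) * sqrt_two_mul_self
  · ring

lemma Rgen_pow_four_smul (v : ℝ × ℝ) : Rgen ^ 4 • v = -v := by
  rw [pow_succ', mul_smul, Rgen_pow_three_smul, Rgen_smul]
  ext <;> simp only [Prod.fst_neg, Prod.snd_neg] <;> ring

lemma Rgen_inv_smul (v : ℝ × ℝ) : Rgen⁻¹ • v = -(Rgen ^ 3 • v) := by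
  rw [inv_smul_eq_iff, smul_neg, smul_smul, ← pow_succ', Rgen_pow_four_smul, neg_neg]

lemma Sgen_smul (v : ℝ × ℝ) : Sgen • v = (v.1 + (2 + √2) * v.2, v.2) := by
  rw [smul_eq_act]
  simp [act, Sgen]

lemma Sgen_inv_smul (v : ℝ × ℝ) : Sgen⁻¹ • v = (v.1 - (2 + √2) * v.2, v.2) := by
  rw [inv_smul_eq_iff, Sgen_smul]
  simp

lemma Sgen_zpow_smul (n : ℤ) (v : ℝ × ℝ) :
    Sgen ^ n • v = (v.1 + n * (2 + √2) * v.2, v.2) := by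
  induction n using Int.induction_on generalizing v with
  | zero => simp
  | succ n ih =>
    rw [_root_.zpow_add_one, mul_smul, Sgen_smul, ih]
    ext <;> push_cast <;> ring
  | pred n ih =>
    rw [_root_.zpow_sub_one, mul_smul, Sgen_inv_smul, ih]
    ext <;> push_cast <;> ring

def ZeroOrLarge (x : ℝ) : Prop := x = 0 ∨ 1 ≤ |x|

lemma ZeroOrLarge.neg {x : ℝ} (h : ZeroOrLarge x) : ZeroOrLarge (-x) := by
  rcases h with h | h
  · exact Or.inl (by rw [h, neg_zero])
  · exact Or.inr (by rwa [abs_neg])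

lemma ZeroOrLarge.of_le {x : ℝ} (h : x ≤ -1 ∨ 1 ≤ x) : ZeroOrLarge x :=
  Or.inr (le_abs'.mpr h)

lemma ZeroOrLarge.le_neg_one {x : ℝ} (h : ZeroOrLarge x) (hx : x < 0) : x ≤ -1 := by
  rcases h with h | h
  · linarith
  · rcases le_abs'.mp h with h | h <;> linarith

lemma ZeroOrLarge.one_le {x : ℝ} (h : ZeroOrLarge x) (hx : 0 < x) : 1 ≤ x := by
  simpa using h.neg.le_neg_one (by linarith)

/-- Directions with `x / y ∉ (0, 2 + √2)`, together with the lower bounds that propagate. -/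
def OuterCone (v : ℝ × ℝ) : Prop :=
  (v.2 = 0 ∧ 1 ≤ |v.1|) ∨
    (1 ≤ |v.2| ∧ 0 ≤ v.1 * (v.1 - (2 + √2) * v.2) ∧
      ZeroOrLarge v.1 ∧ ZeroOrLarge (v.1 - (2 + √2) * v.2))

def InnerCone (v : ℝ × ℝ) : Prop :=
  1 ≤ |v.2| ∧ v.1 * (v.1 - (2 + √2) * v.2) ≤ 0 ∧
    ZeroOrLarge v.1 ∧ ZeroOrLarge (v.1 - (2 + √2) * v.2)

lemma OuterCone.neg {v : ℝ × ℝ} (h : OuterCone v) : OuterCone (-v) := by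
  rcases h with ⟨h2, h1⟩ | ⟨h2, hc, h1, h3⟩
  · exact Or.inl ⟨by simp [h2], by simpa using h1⟩
  · refine Or.inr ⟨by simpa using h2, by simp only [Prod.fst_neg, Prod.snd_neg]; linarith, ?_, ?_⟩
    · exact h1.neg
    · simpa [neg_add_eq_sub, ← neg_sub'] using h3.neg

lemma InnerCone.neg {v : ℝ × ℝ} (h : InnerCone v) : InnerCone (-v) := by
  obtain ⟨h2, hc, h1, h3⟩ := h
  refine ⟨by simpa using h2, by simp only [Prod.fst_neg, Prod.snd_neg]; linarith, h1.neg, ?_⟩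
  simpa [neg_add_eq_sub, ← neg_sub'] using h3.neg

lemma OuterCone.induction_of_neg {P : ℝ × ℝ → Prop} (neg : ∀ v, P (-v) → P v)
    (horizontal : ∀ x : ℝ, 1 ≤ x → P (x, 0))
    (generic : ∀ x y : ℝ, 1 ≤ y → x ≤ 0 ∨ (2 + √2) * y ≤ x →
      ZeroOrLarge x → ZeroOrLarge (x - (2 + √2) * y) → P (x, y))
    {v : ℝ × ℝ} (hv : OuterCone v) : P v := by
  suffices pos : ∀ v, OuterCone v → 0 < v.2 ∨ (v.2 = 0 ∧ 0 < v.1) → P v by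
    rcases id hv with ⟨h2, h1⟩ | ⟨h2, -⟩
    · rcases le_abs'.mp h1 with h1 | h1
      · exact neg v (pos _ hv.neg (Or.inr ⟨by simp [h2], by simp; linarith⟩))
      · exact pos v hv (Or.inr ⟨h2, by linarith⟩)
    · rcases le_abs'.mp h2 with h2 | h2
      · exact neg v (pos _ hv.neg (Or.inl (by simp; linarith)))
      · exact pos v hv (Or.inl (by linarith))
  rintro ⟨x, y⟩ (⟨h2, h1⟩ | ⟨h2, hc, h1, h3⟩) hpos <;> simp only at *
  · subst h2
    exact horizontal x (by rw [abs_of_pos (by simpa using hpos)] at h1; exact h1)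
  · have hy : 1 ≤ y := by
      rcases hpos with hpos | ⟨rfl, -⟩
      · rcases le_abs'.mp h2 with h | h <;> linarith
      · norm_num at h2
    refine generic x y hy ?_ h1 h3
    by_contra! hx
    nlinarith [mul_pos hx.1 (sub_pos.mpr hx.2)]

lemma InnerCone.induction_of_neg {P : ℝ × ℝ → Prop} (neg : ∀ v, P (-v) → P v)
    (generic : ∀ x y : ℝ, 1 ≤ y → 0 ≤ x → x ≤ (2 + √2) * y →
      ZeroOrLarge x → ZeroOrLarge (x - (2 + √2) * y) → P (x, y))
    {v : ℝ × ℝ} (hv : InnerCone v) : P v := by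
  suffices pos : ∀ v, InnerCone v → 0 < v.2 → P v by
    rcases le_abs'.mp hv.1 with h2 | h2
    · exact neg v (pos _ hv.neg (by simp; linarith))
    · exact pos v hv (by linarith)
  rintro ⟨x, y⟩ ⟨h2, hc, h1, h3⟩ hpos
  simp only at *
  have hy : 1 ≤ y := by rcases le_abs'.mp h2 with h | h <;> linarith
  have hc' : 0 < (2 + √2) * y := by positivity
  refine generic x y hy ?_ ?_ h1 h3 <;> by_contra! hx <;> nlinarith

lemma innerCone_Rgen_smul {w : ℝ × ℝ} (hw : OuterCone w) : InnerCone (Rgen • w) := by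
  -- The bounds `hsx`, `hsy` on `√2 * x` and `√2 * y` below make every goal linear.
  have e : ∀ x y : ℝ, (1 + √2) * x - (2 + √2) * y - (2 + √2) * (x - y) = -x := by
    intros; ring
  refine OuterCone.induction_of_neg (P := fun w => InnerCone (Rgen • w))
    (fun v h => by simpa using h.neg) ?_ ?_ hw <;> simp only [InnerCone, Rgen_smul, e]
  · intro x hx
    have hsx := le_sqrt_two_mul (by linarith : 0 ≤ x)
    exact ⟨le_abs'.mpr (Or.inr (by linarith)),
      mul_nonpos_iff.mpr (Or.inl ⟨by linarith, by linarith⟩),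
      .of_le (Or.inr (by linarith)), .of_le (Or.inl (by linarith))⟩
  · intro x y hy hx h1 h3
    have hsy := le_sqrt_two_mul (by linarith : 0 ≤ y)
    rcases hx with hx | hx
    · have hsx := sqrt_two_mul_le hx
      exact ⟨le_abs'.mpr (Or.inl (by linarith)),
        mul_nonpos_iff.mpr (Or.inr ⟨by linarith, by linarith⟩),
        .of_le (Or.inl (by linarith)), h1.neg⟩
    · have hsx := sqrt_two_mul_ge_of_le hx
      exact ⟨le_abs'.mpr (Or.inr (by linarith)),
        mul_nonpos_iff.mpr (Or.inl ⟨by linarith, by linarith⟩),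
        .of_le (Or.inr (by linarith)), h1.neg⟩

lemma innerCone_Rgen_sq_smul {w : ℝ × ℝ} (hw : OuterCone w) : InnerCone (Rgen ^ 2 • w) := by
  have e : ∀ x y : ℝ, (1 + √2) * (x - 2 * y) - (2 + √2) * (√2 * x - (1 + √2) * y) =
      -(x + √2 * x) + (2 * y + √2 * y) := by
    intro x y; linear_combination (y - x) * sqrt_two_mul_self
  refine OuterCone.induction_of_neg (P := fun w => InnerCone (Rgen ^ 2 • w))
    (fun v h => by simpa using h.neg) ?_ ?_ hw <;> simp only [InnerCone, Rgen_sq_smul, e]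
  · intro x hx
    have hsx := le_sqrt_two_mul (by linarith : 0 ≤ x)
    exact ⟨le_abs'.mpr (Or.inr (by linarith)),
      mul_nonpos_iff.mpr (Or.inl ⟨by linarith, by linarith⟩),
      .of_le (Or.inr (by linarith)), .of_le (Or.inl (by linarith))⟩
  · intro x y hy hx h1 h3
    have hsy := le_sqrt_two_mul (by linarith : 0 ≤ y)
    rcases hx with hx | hx
    · have hsx := sqrt_two_mul_le hx
      exact ⟨le_abs'.mpr (Or.inl (by linarith)),
        mul_nonpos_iff.mpr (Or.inr ⟨by linarith, by linarith⟩), .of_le (Or.inl (by linarith)),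
        .of_le (Or.inr (by linarith))⟩
    · have hsx := sqrt_two_mul_ge_of_le hx
      exact ⟨le_abs'.mpr (Or.inr (by linarith)),
        mul_nonpos_iff.mpr (Or.inl ⟨by linarith, by linarith⟩), .of_le (Or.inr (by linarith)),
        .of_le (Or.inl (by linarith))⟩

lemma innerCone_Rgen_pow_three_smul {w : ℝ × ℝ} (hw : OuterCone w) :
    InnerCone (Rgen ^ 3 • w) := by
  have e : ∀ x y : ℝ, x - (2 + √2) * y - (2 + √2) * (x - (1 + √2) * y) =
      -(x + √2 * x) + (2 * y + 2 * (√2 * y)) := by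
    intro x y; linear_combination y * sqrt_two_mul_self
  refine OuterCone.induction_of_neg (P := fun w => InnerCone (Rgen ^ 3 • w))
    (fun v h => by simpa using h.neg) ?_ ?_ hw <;> simp only [InnerCone, Rgen_pow_three_smul, e]
  · intro x hx
    have hsx := le_sqrt_two_mul (by linarith : 0 ≤ x)
    exact ⟨le_abs'.mpr (Or.inr (by linarith)),
      mul_nonpos_iff.mpr (Or.inl ⟨by linarith, by linarith⟩),
      .of_le (Or.inr (by linarith)), .of_le (Or.inl (by linarith))⟩
  · intro x y hy hx h1 h3
    have hsy := le_sqrt_two_mul (by linarith : 0 ≤ y)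
    rcases hx with hx | hx
    · have hsx := sqrt_two_mul_le hx
      exact ⟨le_abs'.mpr (Or.inl (by linarith)),
        mul_nonpos_iff.mpr (Or.inr ⟨by linarith, by linarith⟩), h3, .of_le (Or.inr (by linarith))⟩
    · have hsx := sqrt_two_mul_ge_of_le hx
      exact ⟨le_abs'.mpr (Or.inr (by linarith)),
        mul_nonpos_iff.mpr (Or.inl ⟨by linarith, by linarith⟩), h3, .of_le (Or.inl (by linarith))⟩

lemma ZeroOrLarge.add_int_mul {x t : ℝ} (hx : 0 ≤ x) (hxt : x ≤ t) (ht : 1 ≤ t)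
    (h0 : ZeroOrLarge x) (h1 : ZeroOrLarge (x - t)) (m : ℤ) : ZeroOrLarge (x + m * t) := by
  rcases lt_trichotomy m (-1) with hm | rfl | hm
  · have hm : (m : ℝ) ≤ -2 := by exact_mod_cast (show m ≤ -2 by omega)
    exact .of_le (Or.inl (by nlinarith))
  · simpa [← sub_eq_add_neg] using h1
  rcases eq_or_lt_of_le (show 0 ≤ m by omega) with rfl | hm
  · simpa using h0
  · have hm : (1 : ℝ) ≤ m := by exact_mod_cast hm
    exact .of_le (Or.inr (by nlinarith))

lemma outerCone_Sgen_zpow_smul {v : ℝ × ℝ} (hv : InnerCone v) {n : ℤ} (hn : n ≠ 0) :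
    OuterCone (Sgen ^ n • v) := by
  refine InnerCone.induction_of_neg (P := fun v => OuterCone (Sgen ^ n • v))
    (fun v h => by simpa using h.neg) ?_ hv
  intro x y hy hx0 hxt h0 h1
  set t := (2 + √2) * y
  have ht1 : 1 ≤ t := by nlinarith [Real.sqrt_nonneg 2]
  have e : x + n * (2 + √2) * y - (2 + √2) * y = x + ((n - 1 : ℤ) : ℝ) * t := by push_cast; ring
  rw [Sgen_zpow_smul]
  refine Or.inr ⟨le_abs'.mpr (Or.inr hy), ?_, ?_, ?_⟩ <;> simp only [e]
  · rcases lt_or_gt_of_ne hn with hn | hn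
    · have : (n : ℝ) ≤ -1 := by exact_mod_cast (show n ≤ -1 by omega)
      exact mul_nonneg_of_nonpos_of_nonpos (by nlinarith) (by push_cast; nlinarith)
    · have : (1 : ℝ) ≤ n := by exact_mod_cast hn
      exact mul_nonneg (by nlinarith) (by push_cast; nlinarith)
  · simpa [mul_assoc] using h0.add_int_mul hx0 hxt ht1 h1 n
  · exact h0.add_int_mul hx0 hxt ht1 h1 (n - 1)

lemma innerCone_Rgen_pow_smul {w : ℝ × ℝ} (hw : OuterCone w) {k : ℕ} (hk1 : 1 ≤ k)
    (hk3 : k ≤ 3) : InnerCone (Rgen ^ k • w) := by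
  interval_cases k
  · simpa using innerCone_Rgen_smul hw
  · exact innerCone_Rgen_sq_smul hw
  · exact innerCone_Rgen_pow_three_smul hw

inductive Sector
  | inner
  | outer

def Sector.Contains : Sector → ℝ × ℝ → Prop
  | inner => InnerCone
  | outer => OuterCone

/-- The vectors `g • e` with `e` an axis vector of length at least one and `g` an alternating
word in `R^k` (`1 ≤ k ≤ 3`) and `S^n` (`n ≠ 0`); the sector records whether the leftmost letter
is a power of `R`. Vertical vectors lie on the boundary of both cones, so either kind of letter
may follow them. -/
inductive ReducedOrbit : Sector → ℝ × ℝ → Prop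
  | horizontal {x : ℝ} : 1 ≤ |x| → ReducedOrbit .outer (x, 0)
  | vertical (s : Sector) {y : ℝ} : 1 ≤ |y| → ReducedOrbit s (0, y)
  | rotate {w : ℝ × ℝ} {k : ℕ} : 1 ≤ k → k ≤ 3 → ReducedOrbit .outer w →
      ReducedOrbit .inner (Rgen ^ k • w)
  | shear {v : ℝ × ℝ} {n : ℤ} : n ≠ 0 → ReducedOrbit .inner v →
      ReducedOrbit .outer (Sgen ^ n • v)

lemma ReducedOrbit.contains {s : Sector} {v : ℝ × ℝ} (h : ReducedOrbit s v) : s.Contains v := by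
  induction h with
  | horizontal hx => exact Or.inl ⟨rfl, hx⟩
  | @vertical s y hy =>
    have hc : ZeroOrLarge (0 - (2 + √2) * y) := by
      refine Or.inr ?_
      rw [zero_sub, abs_neg, abs_mul, abs_of_pos (by positivity)]
      nlinarith [Real.sqrt_nonneg 2, abs_nonneg y]
    cases s
    · exact ⟨hy, by simp, Or.inl rfl, hc⟩
    · exact Or.inr ⟨hy, by simp, Or.inl rfl, hc⟩
  | rotate hk1 hk3 _ ih => exact innerCone_Rgen_pow_smul ih hk1 hk3
  | shear hn _ ih => exact outerCone_Sgen_zpow_smul ih hn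

lemma ReducedOrbit.neg {s : Sector} {v : ℝ × ℝ} (h : ReducedOrbit s v) : ReducedOrbit s (-v) := by
  induction h with
  | horizontal hx => simpa using ReducedOrbit.horizontal (x := -_) (by simpa using hx)
  | vertical s hy => simpa using ReducedOrbit.vertical s (y := -_) (by simpa using hy)
  | rotate hk1 hk3 _ ih => simpa using ih.rotate hk1 hk3
  | shear hn _ ih => simpa using ih.shear hn

namespace ReducedOrbit

lemma rotate_one {w : ℝ × ℝ} (h : ReducedOrbit .outer w) : ReducedOrbit .inner (Rgen • w) := by
  simpa using h.rotate (k := 1) le_rfl (by norm_num)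

lemma rotate_inv {w : ℝ × ℝ} (h : ReducedOrbit .outer w) : ReducedOrbit .inner (Rgen⁻¹ • w) := by
  simpa [Rgen_inv_smul] using (h.rotate (k := 3) (by norm_num) le_rfl).neg

lemma exists_Rgen_smul {s : Sector} {v : ℝ × ℝ} (h : ReducedOrbit s v) :
    ∃ s', ReducedOrbit s' (Rgen • v) := by
  rcases h with hx | ⟨s, hy⟩ | @⟨w, k, hk1, hk3, hw⟩ | ⟨hn, hv⟩
  · exact ⟨_, (horizontal hx).rotate_one⟩
  · exact ⟨_, (vertical .outer hy).rotate_one⟩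
  · rw [smul_smul, ← pow_succ']
    rcases (show k + 1 ≤ 3 ∨ k = 3 by omega) with hk | rfl
    · exact ⟨_, hw.rotate (by omega) hk⟩
    · exact ⟨_, by simpa [Rgen_pow_four_smul] using hw.neg⟩
  · exact ⟨_, (shear hn hv).rotate_one⟩

lemma exists_Rgen_inv_smul {s : Sector} {v : ℝ × ℝ} (h : ReducedOrbit s v) :
    ∃ s', ReducedOrbit s' (Rgen⁻¹ • v) := by
  rcases h with hx | ⟨s, hy⟩ | @⟨w, k, hk1, hk3, hw⟩ | ⟨hn, hv⟩
  · exact ⟨_, (horizontal hx).rotate_inv⟩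
  · exact ⟨_, (vertical .outer hy).rotate_inv⟩
  · obtain ⟨j, rfl⟩ : ∃ j, k = j + 1 := ⟨k - 1, by omega⟩
    rw [pow_succ', mul_smul, inv_smul_smul]
    rcases Nat.eq_zero_or_pos j with rfl | hj
    · exact ⟨_, by simpa using hw⟩
    · exact ⟨_, hw.rotate hj (by omega)⟩
  · exact ⟨_, (shear hn hv).rotate_inv⟩

lemma exists_Sgen_zpow_smul {s : Sector} {v : ℝ × ℝ} (h : ReducedOrbit s v) (m : ℤ) :
    ∃ s', ReducedOrbit s' (Sgen ^ m • v) := by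
  rcases eq_or_ne m 0 with rfl | hm
  · exact ⟨s, by simpa using h⟩
  rcases h with hx | ⟨s, hy⟩ | ⟨hk1, hk3, hw⟩ | @⟨u, n, hn, hu⟩
  · exact ⟨_, by simpa [Sgen_zpow_smul] using horizontal hx⟩
  · exact ⟨_, (vertical .inner hy).shear hm⟩
  · exact ⟨_, (hw.rotate hk1 hk3).shear hm⟩
  · rw [smul_smul, ← _root_.zpow_add]
    rcases eq_or_ne (m + n) 0 with hmn | hmn
    · exact ⟨_, by simpa [hmn] using hu⟩
    · exact ⟨_, hu.shear hmn⟩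

end ReducedOrbit

lemma exists_reducedOrbit_smul {γ : SL2} (hγ : γ ∈ Γ) {s : Sector} {v : ℝ × ℝ}
    (h : ReducedOrbit s v) : ∃ s', ReducedOrbit s' (γ • v) := by
  induction hγ using Subgroup.closure_induction_left generalizing s v with
  | one => exact ⟨s, by simpa using h⟩
  | mul_left g hg γ _ ih =>
    obtain ⟨s', h'⟩ := ih h
    rw [mul_smul]
    rcases hg with rfl | rfl
    · exact h'.exists_Rgen_smul
    · simpa using h'.exists_Sgen_zpow_smul 1
  | inv_mul_cancel g hg γ _ ih =>
    obtain ⟨s', h'⟩ := ih h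
    rw [mul_smul]
    rcases hg with rfl | rfl
    · exact h'.exists_Rgen_inv_smul
    · simpa using h'.exists_Sgen_zpow_smul (-1)

lemma ReducedOrbit.zeroOrLarge {s : Sector} {v : ℝ × ℝ} (h : ReducedOrbit s v) :
    ZeroOrLarge v.1 ∧ ZeroOrLarge v.2 := by
  cases s
  · obtain ⟨h2, -, h1, -⟩ := h.contains
    exact ⟨h1, Or.inr h2⟩
  · rcases h.contains with ⟨h2, h1⟩ | ⟨h2, -, h1, -⟩
    · exact ⟨Or.inr h1, Or.inl h2⟩
    · exact ⟨h1, Or.inr h2⟩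

lemma zeroOrLarge_of_mem_Lambda {u : ℝ × ℝ} (hu : u ∈ Lambda) :
    ZeroOrLarge u.1 ∧ ZeroOrLarge u.2 := by
  have hs := Real.one_lt_sqrt_two
  have h1 : (1 : ℝ) ≤ |1| := by simp
  have hs1 : 1 ≤ |1 + √2| := by rw [abs_of_pos (by positivity)]; linarith
  have hs2 : 1 ≤ |√2| := by rw [abs_of_pos (by positivity)]; linarith
  suffices ∃ s, ReducedOrbit s u from this.elim fun _ h => h.zeroOrLarge
  rcases hu with ((⟨γ, hγ, rfl⟩ | ⟨γ, hγ, rfl⟩) | ⟨γ, hγ, rfl⟩) | ⟨γ, hγ, rfl⟩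
  · exact exists_reducedOrbit_smul hγ (.horizontal h1)
  · exact exists_reducedOrbit_smul hγ (.horizontal hs1)
  · exact exists_reducedOrbit_smul hγ (.vertical .outer h1)
  · exact exists_reducedOrbit_smul hγ (.vertical .outer hs2)

lemma neg_one_zero_mem_Lambda : ((-1 : ℝ), (0 : ℝ)) ∈ Lambda := by
  refine Or.inl (Or.inl (Or.inl ⟨Rgen ^ 4, pow_mem (Subgroup.subset_closure (by simp)) 4, ?_⟩))
  rw [← smul_eq_act, Rgen_pow_four_smul]
  simp

lemma act_Mmat_mul_Rot (a b : ℝ) (u : ℝ × ℝ) :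
    act (Mmat a b * Rot) u = (a * u.2 - b * u.1, -(a⁻¹ * u.1)) := by
  ext <;> simp [act, Mmat, Rot]
  ring

lemma one_div_mul_le_slope {a b x y : ℝ} (ha : 0 < a) (hb : 0 < b) (hab : 1 < a + b)
    (hx : ZeroOrLarge x) (hy : ZeroOrLarge y) (hw1 : 0 < a * y - b * x)
    (hw1' : a * y - b * x ≤ 1) (hw2 : 0 < -(a⁻¹ * x)) :
    1 / (a * b) ≤ -(a⁻¹ * x) / (a * y - b * x) := by
  have hx0 : x < 0 := by
    by_contra! h
    nlinarith [mul_nonneg (inv_pos.mpr ha).le h]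
  have hx1 := hx.le_neg_one hx0
  have hy0 : y ≤ 0 := by
    by_contra! h
    nlinarith [hy.one_le h]
  rw [div_le_div_iff₀ (by positivity) hw1]
  field_simp
  nlinarith

/-- On the region Ω₂ (0 < a ≤ 1, 1 − a < b ≤ 1), the set of positive slopes of vectors of
M_{a,b}·Rot·Λ in the vertical strip (0,1] × (0,∞) has least element 1/(ab): the return time of
the horocycle flow on the part Ω₂ of the Poincaré section. -/
theorem return_time_Omega2 (a b : ℝ) (ha0 : 0 < a) (ha1 : a ≤ 1)
    (hb0 : 1 - a < b) (hb1 : b ≤ 1) :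
    IsLeast
      {s | ∃ u ∈ Lambda, 0 < (act (Mmat a b * Rot) u).1 ∧ (act (Mmat a b * Rot) u).1 ≤ 1 ∧
        0 < (act (Mmat a b * Rot) u).2 ∧
        s = (act (Mmat a b * Rot) u).2 / (act (Mmat a b * Rot) u).1}
      (1 / (a * b)) := by
  have hb : 0 < b := by linarith
  refine ⟨⟨(-1, 0), neg_one_zero_mem_Lambda, ?_⟩, ?_⟩
  · simp only [act_Mmat_mul_Rot]
    refine ⟨by simpa, by simpa, by simpa, ?_⟩
    simp only [one_div, _root_.mul_inv_rev, mul_neg, mul_one, neg_neg, mul_zero, sub_neg_eq_add,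
      zero_add]
    field_simp
  · rintro _ ⟨u, hu, hw1, hw1', hw2, rfl⟩
    simp only [act_Mmat_mul_Rot] at *
    obtain ⟨hx, hy⟩ := zeroOrLarge_of_mem_Lambda hu
    exact one_div_mul_le_slope ha0 hb (by linarith) hx hy hw1 hw1' hw2

end
end

section
/- The total integral of the return time function over the Poincaré section Ω equals 3π²/4, the covolume of the Veech group Γ. Explicitly: 2·∫₀¹ (∫_{1−x}^1 1/(xy) dy) dx + ∫₀^{√2−1} (∫_{1−(1+√2)x}^{1−x} 1/(x(x+y)) dy) dx + ∫_{√2−1}^{1} (∫_{(1−(1+√2)x)/√2}^{1−x} 1/(x(x+y)) dy) dx + ∫_{√2−1}^{1} (∫_{1−(1+√2)x}^{(1−(1+√2)x)/√2} √2/(x((1+√2)x+√2·y)) dy) dx + ∫₀^{1} (∫_{1−(2+√2)x}^{1−(1+√2)x} 1/(x((1+√2)x+y)) dy) dx = 3π²/4. -/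
/-!
Every inner integral is elementary: for `x` fixed, `∫ B / (x (A + B y)) dy` is
`(log (A + B q) - log (A + B p)) / x`, and the upper value `A + B q` is `1` in all five terms.
Each outer integral is therefore a difference of values of the dilogarithm
`Li₂ t = -∫₀ᵗ log (1 - s) / s ds`, up to multiples of `log √2 · log (√2 - 1)`, and the total is
`4 Li₂ 1 + Li₂ (2 - √2) - Li₂ (√2 - 1) + Li₂ (1/√2) - Li₂ (1 - 1/√2)`.
Euler's reflection formula, Landen's formula and Landen's identity for Legendre's `χ₂`, evaluated
at the fixed point `√2 - 1` of `x ↦ (1 - x) / (1 + x)`, reduce this to `Li₂ 1 = ζ 2 = π² / 6` and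
`Li₂ (-1) = -π² / 12`. Each functional equation is proved by checking that the derivative vanishes
and reading off the constant at an end of the interval.
-/

open Real MeasureTheory intervalIntegral Set Filter Topology

lemma eq_of_hasDerivAt_eq_zero {φ : ℝ → ℝ} {a b : ℝ} (hab : a ≤ b)
    (hc : ContinuousOn φ (Icc a b)) (hd : ∀ x ∈ Ioo a b, HasDerivAt φ 0 x) : φ a = φ b := by
  rcases hab.eq_or_lt with rfl | hlt
  · rfl
  obtain ⟨c, -, hslope⟩ := exists_hasDerivAt_eq_slope φ (fun _ => 0) hlt hc hd
  rw [eq_comm, div_eq_zero_iff, sub_eq_zero] at hslope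
  exact (hslope.resolve_right (sub_ne_zero.2 hlt.ne')).symm

lemma eq_of_hasDerivAt_eq_zero_of_tendsto {φ : ℝ → ℝ} {a b c x : ℝ}
    (hd : ∀ y ∈ Ioo a b, HasDerivAt φ 0 y) (hlim : Tendsto φ (𝓝[<] b) (𝓝 c))
    (hx : x ∈ Ioo a b) : φ x = c := by
  refine tendsto_nhds_unique (tendsto_const_nhds.congr' ?_) hlim
  filter_upwards [Ioo_mem_nhdsLT hx.2] with y hy
  refine eq_of_hasDerivAt_eq_zero hy.1.le (fun z hz => ?_) (fun z hz => hd z ⟨?_, ?_⟩)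
  · exact (hd z ⟨hx.1.trans_le hz.1, hz.2.trans_lt hy.2⟩).continuousAt.continuousWithinAt
  · exact hx.1.trans hz.1
  · exact hz.2.trans hy.2

lemma tendsto_log_mul_log_one_sub : Tendsto (fun x => log x * log (1 - x)) (𝓝[<] 1) (𝓝 0) := by
  have hsub : Tendsto (fun x : ℝ => 1 - x) (𝓝[<] 1) (𝓝[>] 0) := by
    have h := (Filter.map_subLeft_nhdsLT (c := (1:ℝ)) (a := 1)).le
    rwa [sub_self] at h
  have hdom : Tendsto (fun x : ℝ => 2 * |log (1 - x) * (1 - x)|) (𝓝[<] 1) (𝓝 0) := by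
    simpa using ((show Tendsto (fun u : ℝ => log u * u) (𝓝[>] 0) (𝓝 0) by
      simpa using tendsto_log_mul_rpow_nhdsGT_zero one_pos).comp hsub).abs.const_mul 2
  refine squeeze_zero_norm' ?_ hdom
  filter_upwards [Ioo_mem_nhdsLT (show (1/2:ℝ) < 1 by norm_num)] with x hx
  have hx₀ : 0 < x := by linarith [hx.1]
  have hlog : |log x| ≤ 2 * (1 - x) := by
    rw [abs_of_nonpos (log_nonpos hx₀.le hx.2.le)]
    have hinv : x⁻¹ ≤ 2 := by rw [inv_le_comm₀ hx₀ two_pos]; linarith [hx.1]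
    have : x⁻¹ - 1 = (1 - x) * x⁻¹ := by field_simp
    nlinarith [one_sub_inv_le_log_of_pos hx₀, mul_le_mul_of_nonneg_left hinv (sub_pos.2 hx.2).le]
  rw [norm_mul, norm_eq_abs, norm_eq_abs, abs_mul, abs_of_pos (sub_pos.2 hx.2)]
  nlinarith [abs_nonneg (log (1 - x))]

lemma integral_div_mul_add_mul {x A B p q : ℝ} (hp : 0 < A + B * p) (hq : 0 < A + B * q) :
    ∫ y in p..q, B / (x * (A + B * y)) = (log (A + B * q) - log (A + B * p)) / x := by
  have hpos : ∀ y ∈ uIcc p q, 0 < A + B * y := by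
    intro y hy
    rcases mem_uIcc.1 hy with ⟨h₁, h₂⟩ | ⟨h₁, h₂⟩ <;> rcases le_total 0 B with hB | hB <;> nlinarith
  have hderiv : ∀ y ∈ uIcc p q, HasDerivAt (fun y => log (A + B * y)) (B / (A + B * y)) y := by
    intro y hy
    simpa [div_eq_inv_mul] using ((hasDerivAt_id' y).const_mul B |>.const_add A).log (hpos y hy).ne'
  have hcont : ContinuousOn (fun y => B / (A + B * y)) (uIcc p q) :=
    continuousOn_const.div (by fun_prop) fun y hy => (hpos y hy).ne'
  simp_rw [div_mul_eq_div_div_swap]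
  rw [intervalIntegral.integral_div, integral_eq_sub_of_hasDerivAt hderiv hcont.intervalIntegrable]

namespace Real

/-- At `t = 0` the integrand takes the junk value `0` instead of its limit `1`: this changes no
integral, but the integrand is discontinuous there, so derivatives of `dilog` are taken off `0`. -/
noncomputable def dilog (x : ℝ) : ℝ := ∫ t in (0:ℝ)..x, -log (1 - t) / t

lemma abs_neg_log_one_sub_div_le {t : ℝ} (ht : t ∈ Icc (-1:ℝ) 1) :
    |-log (1 - t) / t| ≤ 2 + 2 * |log (1 - t)| := by
  rw [abs_div, abs_neg]
  rcases eq_or_ne t 0 with rfl | ht₀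
  · simp
  rcases le_or_gt |t| (1 / 2) with hsmall | hlarge
  · have hbound := abs_log_sub_add_sum_range_le (x := t) (by linarith) 0
    simp only [Finset.range_zero, Finset.sum_empty, zero_add, pow_one] at hbound
    have h2 : |log (1 - t)| ≤ 2 * |t| :=
      hbound.trans ((div_le_iff₀ (by linarith)).2 (by nlinarith [abs_nonneg t]))
    rw [div_le_iff₀ (abs_pos.2 ht₀)]
    nlinarith [abs_nonneg t]
  · rw [div_le_iff₀ (abs_pos.2 ht₀)]
    have ht₁ : |t| ≤ 1 := abs_le.2 ht
    nlinarith [abs_nonneg (log (1 - t))]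

lemma measurable_neg_log_one_sub_div : Measurable fun t : ℝ => -log (1 - t) / t := by
  fun_prop

lemma intervalIntegrable_neg_log_one_sub_div {a b : ℝ} (ha : a ∈ Icc (-1:ℝ) 1)
    (hb : b ∈ Icc (-1:ℝ) 1) :
    IntervalIntegrable (fun t => -log (1 - t) / t) volume a b := by
  have hlog : IntervalIntegrable (fun t => log (1 - t)) volume (-1) 1 := by
    have h := (intervalIntegrable_log' (a := 2) (b := 0)).comp_sub_left 1
    norm_num at h
    exact h
  have hbound : IntervalIntegrable (fun t => 2 + 2 * |log (1 - t)|) volume (-1) 1 :=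
    intervalIntegrable_const.add (hlog.norm.const_mul 2)
  refine (hbound.mono_fun' measurable_neg_log_one_sub_div.aestronglyMeasurable ?_).mono_set
    (uIcc_subset_uIcc ?_ ?_)
  · rw [uIoc_of_le (by norm_num)]
    filter_upwards [ae_restrict_mem measurableSet_Ioc] with t ht
    exact abs_neg_log_one_sub_div_le (Ioc_subset_Icc_self ht)
  all_goals simpa

lemma continuousOn_dilog : ContinuousOn dilog (Icc (-1) 1) := by
  have h := continuousOn_primitive_interval' (a := 0)
    (intervalIntegrable_neg_log_one_sub_div (a := -1) (b := 1) (by norm_num) (by norm_num))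
    (by simp)
  rwa [uIcc_of_le (by norm_num)] at h

lemma hasDerivAt_dilog {x : ℝ} (hx₁ : -1 ≤ x) (hx₂ : x < 1) (hx₀ : x ≠ 0) :
    HasDerivAt dilog (-log (1 - x) / x) x :=
  integral_hasDerivAt_right
    (intervalIntegrable_neg_log_one_sub_div (by norm_num) ⟨hx₁, hx₂.le⟩)
    measurable_neg_log_one_sub_div.aestronglyMeasurable.stronglyMeasurableAtFilter
    (((continuousAt_log (by linarith)).comp (by fun_prop)).neg.div continuousAt_id hx₀)

@[simp]
lemma dilog_zero : dilog 0 = 0 := integral_same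

lemma hasSum_pow_div_neg_log_one_sub_div {t : ℝ} (ht : |t| < 1) (ht₀ : t ≠ 0) :
    HasSum (fun n : ℕ => t ^ n / (n + 1)) (-log (1 - t) / t) := by
  have h := (hasSum_pow_div_log_of_abs_lt_one ht).div_const t
  have hterm (n : ℕ) : t ^ (n + 1) / (n + 1) / t = t ^ n / (n + 1) := by
    rw [pow_succ]
    field_simp
  simpa only [hterm] using h

lemma dilog_one : dilog 1 = π ^ 2 / 6 := by
  have hterm (n : ℕ) : ∫ t in Ioo (0:ℝ) 1, t ^ n / (n + 1) = 1 / ((n:ℝ) + 1) ^ 2 := by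
    rw [MeasureTheory.integral_div, ← integral_Ioc_eq_integral_Ioo, ← integral_of_le zero_le_one,
      integral_pow]
    field_simp
    simp
  have hnorm (n : ℕ) : ∫ t in Ioo (0:ℝ) 1, ‖t ^ n / (n + 1)‖ = 1 / ((n:ℝ) + 1) ^ 2 := by
    rw [← hterm n]
    refine setIntegral_congr_fun measurableSet_Ioo fun t ht => ?_
    exact norm_of_nonneg (by have := ht.1.le; positivity)
  have hzeta : HasSum (fun n : ℕ => 1 / ((n:ℝ) + 1) ^ 2) (π ^ 2 / 6) := by
    simpa using (hasSum_nat_add_iff' 1).2 hasSum_zeta_two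
  have hsum := hasSum_integral_of_summable_integral_norm
    (F := fun (n : ℕ) (t : ℝ) => t ^ n / (n + 1)) (μ := volume.restrict (Ioo 0 1))
    (fun n => (continuous_pow n).div_const _ |>.integrableOn_Icc.mono_set Ioo_subset_Icc_self)
    (by simpa only [hnorm] using hzeta.summable)
  simp only [hterm] at hsum
  rw [hzeta.unique hsum, dilog, integral_of_le zero_le_one, integral_Ioc_eq_integral_Ioo]
  refine setIntegral_congr_fun measurableSet_Ioo fun t ht => ?_
  exact ((hasSum_pow_div_neg_log_one_sub_div (abs_lt.2 ⟨by linarith [ht.1], ht.2⟩)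
    ht.1.ne').tsum_eq).symm

lemma _root_.HasDerivAt.dilog {g : ℝ → ℝ} {g' x : ℝ} (hg : HasDerivAt g g' x)
    (h₁ : -1 ≤ g x) (h₂ : g x < 1) (h₀ : g x ≠ 0) :
    HasDerivAt (fun y => dilog (g y)) (-log (1 - g x) / g x * g') x :=
  (hasDerivAt_dilog h₁ h₂ h₀).comp x hg

lemma _root_.Filter.Tendsto.dilog {α : Type*} {l : Filter α} {g : α → ℝ} {c : ℝ}
    (hg : Tendsto g l (𝓝 c)) (hgI : ∀ᶠ a in l, g a ∈ Icc (-1:ℝ) 1)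
    (hc : c ∈ Icc (-1:ℝ) 1) :
    Tendsto (fun a => dilog (g a)) l (𝓝 (dilog c)) :=
  (continuousOn_dilog c hc).tendsto.comp (tendsto_nhdsWithin_iff.2 ⟨hg, hgI⟩)

theorem dilog_add_dilog_one_sub {x : ℝ} (hx : x ∈ Ioo 0 1) :
    dilog x + dilog (1 - x) + log x * log (1 - x) = π ^ 2 / 6 := by
  refine eq_of_hasDerivAt_eq_zero_of_tendsto
    (φ := fun x => dilog x + dilog (1 - x) + log x * log (1 - x)) (fun y hy => ?_) ?_ hx
  · obtain ⟨hy₀, hy₁⟩ := hy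
    have hsub := (hasDerivAt_id' y).const_sub 1
    have h := ((hasDerivAt_dilog (by linarith) hy₁ hy₀.ne').add
      (hsub.dilog (by simp; linarith) (by simpa using hy₀) (by simp; linarith))).add
      ((hasDerivAt_log hy₀.ne').mul (hsub.log (by simp; linarith)))
    refine h.congr_deriv ?_
    rw [sub_sub_cancel]
    field_simp
    ring
  · have hI : ∀ᶠ y in 𝓝[<] (1:ℝ), y ∈ Ioo (0:ℝ) 1 := Ioo_mem_nhdsLT one_pos
    have h₁ : Tendsto dilog (𝓝[<] 1) (𝓝 (dilog 1)) :=
      (tendsto_nhdsWithin_of_tendsto_nhds tendsto_id).dilog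
        (hI.mono fun y hy => show y ∈ _ from ⟨by linarith [hy.1], hy.2.le⟩) (by norm_num)
    have h₂ : Tendsto (fun y => dilog (1 - y)) (𝓝[<] 1) (𝓝 (dilog (1 - 1))) :=
      (tendsto_nhdsWithin_of_tendsto_nhds (tendsto_id.const_sub 1)).dilog
        (hI.mono fun y hy => show 1 - y ∈ _ from ⟨by linarith [hy.2], by linarith [hy.1]⟩)
        (by norm_num)
    simpa [dilog_one] using (h₁.add h₂).add tendsto_log_mul_log_one_sub

theorem dilog_add_dilog_neg {x : ℝ} (hx : x ∈ Icc 0 1) :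
    dilog x + dilog (-x) = dilog (x ^ 2) / 2 := by
  have h := eq_of_hasDerivAt_eq_zero (φ := fun y => dilog y + dilog (-y) - dilog (y ^ 2) / 2)
    hx.1 ?_ fun y hy => ?_
  · simp only [neg_zero, dilog_zero, ne_eq, OfNat.ofNat_ne_zero, not_false_eq_true, zero_pow,
      zero_div, sub_zero, add_zero] at h
    linarith
  · refine ((continuousOn_dilog.mono ?_).add (continuousOn_dilog.comp continuousOn_neg ?_)).sub
      ((continuousOn_dilog.comp (continuousOn_pow 2) ?_).div_const 2)
    all_goals
      intro y ⟨hy₀, hy₁⟩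
      constructor <;> nlinarith [hx.2]
  · obtain ⟨hy₀, hyx⟩ := hy
    have hy₁ : y < 1 := hyx.trans_le hx.2
    have h := ((hasDerivAt_dilog (by linarith) hy₁ hy₀.ne').add
      ((hasDerivAt_neg' y).dilog (by linarith) (by linarith) (by simpa using hy₀.ne'))).sub
      (((hasDerivAt_pow 2 y).dilog (by nlinarith) (by nlinarith) (by positivity)).div_const 2)
    refine h.congr_deriv ?_
    rw [show 1 - y ^ 2 = (1 - y) * (1 + y) by ring, log_mul (by linarith) (by linarith),
      sub_neg_eq_add]
    field_simp
    ring

lemma dilog_neg_one : dilog (-1) = -(π ^ 2 / 12) := by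
  have h := dilog_add_dilog_neg (x := 1) (by norm_num)
  rw [one_pow, dilog_one] at h
  linarith

theorem dilog_add_dilog_div_sub_one {z : ℝ} (hz : z ∈ Icc (-1) 0) :
    dilog z + dilog (z / (z - 1)) + log (1 - z) ^ 2 / 2 = 0 := by
  have hmem : ∀ y ∈ Icc z 0, y / (y - 1) ∈ Icc (-1:ℝ) 1 := by
    intro y ⟨hy₀, hy₁⟩
    have : y - 1 < 0 := by linarith
    constructor
    · rw [le_div_iff_of_neg this]; linarith
    · rw [div_le_iff_of_neg this]; linarith
  have h := eq_of_hasDerivAt_eq_zero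
    (φ := fun y => dilog y + dilog (y / (y - 1)) + log (1 - y) ^ 2 / 2) hz.2 ?_ fun y hy => ?_
  · simpa using h
  · refine ((continuousOn_dilog.mono ?_).add (continuousOn_dilog.comp ?_ hmem)).add ?_
    · exact Icc_subset_Icc hz.1 (by norm_num)
    · exact continuousOn_id.div (continuousOn_id.sub continuousOn_const)
        fun y hy => by linarith [hy.2]
    · exact ((ContinuousOn.log (f := fun y => 1 - y) (by fun_prop) fun y hy => by
        linarith [hy.2]).pow 2).div_const 2
  · obtain ⟨hy₀, hy₁⟩ := hy
    have hne : y - 1 ≠ 0 := (by linarith : y - 1 < 0).ne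
    have hne' : 1 - y ≠ 0 := (by linarith : 0 < 1 - y).ne'
    have hy : y ≠ 0 := hy₁.ne
    have hsub := (hasDerivAt_id' y).const_sub 1
    have h := ((hasDerivAt_dilog (by linarith [hz.1]) (by linarith) hy₁.ne).add
      (((hasDerivAt_id' y).fun_div ((hasDerivAt_id' y).sub_const 1) hne).dilog
        (hmem y ⟨hy₀.le, hy₁.le⟩).1 ?_ ?_)).add (((hsub.log (by linarith)).pow 2).div_const 2)
    · refine h.congr_deriv ?_
      rw [show 1 - y / (y - 1) = (1 - y)⁻¹ by field_simp; ring, log_inv]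
      field_simp
      ring
    · exact (div_lt_one_of_neg (by linarith)).2 (by linarith)
    · exact div_ne_zero hy hne

noncomputable def legendreChi (x : ℝ) : ℝ := (dilog x - dilog (-x)) / 2

lemma legendreChi_one : legendreChi 1 = π ^ 2 / 8 := by
  rw [legendreChi, dilog_one, dilog_neg_one]
  ring

@[simp]
lemma legendreChi_zero : legendreChi 0 = 0 := by simp [legendreChi]

lemma hasDerivAt_legendreChi {x : ℝ} (h₁ : -1 < x) (h₂ : x < 1) (h₀ : x ≠ 0) :
    HasDerivAt legendreChi ((log (1 + x) - log (1 - x)) / (2 * x)) x := by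
  have h := ((hasDerivAt_dilog h₁.le h₂ h₀).sub
    ((hasDerivAt_neg' x).dilog (by linarith) (by linarith) (neg_ne_zero.2 h₀))).div_const 2
  refine h.congr_deriv ?_
  rw [sub_neg_eq_add]
  field_simp
  ring

lemma _root_.Filter.Tendsto.legendreChi {α : Type*} {l : Filter α} {g : α → ℝ} {c : ℝ}
    (hg : Tendsto g l (𝓝 c)) (hgI : ∀ᶠ a in l, g a ∈ Icc (-1:ℝ) 1)
    (hc : c ∈ Icc (-1:ℝ) 1) :
    Tendsto (fun a => legendreChi (g a)) l (𝓝 (legendreChi c)) := by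
  have hneg : ∀ᶠ a in l, -g a ∈ Icc (-1:ℝ) 1 :=
    hgI.mono fun a ha => ⟨by linarith [ha.2], by linarith [ha.1]⟩
  exact ((hg.dilog hgI hc).sub
    (hg.neg.dilog hneg ⟨by linarith [hc.2], by linarith [hc.1]⟩)).div_const 2

lemma one_sub_div_one_add_mem_Ioo {x : ℝ} (hx : x ∈ Ioo 0 1) :
    (1 - x) / (1 + x) ∈ Ioo 0 1 :=
  ⟨div_pos (by linarith [hx.2]) (by linarith [hx.1]),
    (div_lt_one (by linarith [hx.1])).2 (by linarith [hx.1])⟩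

theorem legendreChi_add_legendreChi_one_sub_div_one_add {x : ℝ} (hx : x ∈ Ioo 0 1) :
    legendreChi x + legendreChi ((1 - x) / (1 + x))
      = π ^ 2 / 8 + log x * (log (1 + x) - log (1 - x)) / 2 := by
  refine eq_add_of_sub_eq (eq_of_hasDerivAt_eq_zero_of_tendsto (φ := fun y => legendreChi y
    + legendreChi ((1 - y) / (1 + y)) - log y * (log (1 + y) - log (1 - y)) / 2)
    (fun y hy => ?_) ?_ hx)
  · obtain ⟨hy₀, hy₁⟩ := hy
    obtain ⟨hv₀, hv₁⟩ := one_sub_div_one_add_mem_Ioo ⟨hy₀, hy₁⟩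
    have hv := ((hasDerivAt_id' y).const_sub 1).fun_div ((hasDerivAt_id' y).const_add 1)
      (by linarith)
    have h := ((hasDerivAt_legendreChi (by linarith) hy₁ hy₀.ne').add
      ((hasDerivAt_legendreChi (by linarith) hv₁ hv₀.ne').comp y hv)).sub
      (((hasDerivAt_log hy₀.ne').mul
        ((((hasDerivAt_id' y).const_add 1).log (by linarith)).sub
          (((hasDerivAt_id' y).const_sub 1).log (by linarith)))).div_const 2)
    refine h.congr_deriv ?_
    have hadd : 1 + (1 - y) / (1 + y) = 2 / (1 + y) := by field_simp; ring
    have hsub : 1 - (1 - y) / (1 + y) = 2 * y / (1 + y) := by field_simp; ring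
    rw [hadd, hsub, log_div (by norm_num) (by linarith), log_div (by positivity) (by linarith),
      log_mul (by norm_num) hy₀.ne', Pi.sub_apply]
    field_simp
    ring
  · have hI : ∀ᶠ y in 𝓝[<] (1:ℝ), y ∈ Ioo (0:ℝ) 1 := Ioo_mem_nhdsLT one_pos
    have hχ₁ : Tendsto legendreChi (𝓝[<] 1) (𝓝 (legendreChi 1)) :=
      (tendsto_nhdsWithin_of_tendsto_nhds tendsto_id).legendreChi
        (hI.mono fun y hy => show y ∈ _ from ⟨by linarith [hy.1], hy.2.le⟩) (by norm_num)
    have hχ₂ : Tendsto (fun y => legendreChi ((1 - y) / (1 + y))) (𝓝[<] 1)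
        (𝓝 (legendreChi ((1 - 1) / (1 + 1)))) := by
      refine Tendsto.legendreChi ?_ (hI.mono fun y hy => ?_) (by norm_num)
      · exact ((tendsto_const_nhds.sub tendsto_id).div (tendsto_const_nhds.add tendsto_id)
          (by norm_num)).mono_left nhdsWithin_le_nhds
      · obtain ⟨hv₀, hv₁⟩ := one_sub_div_one_add_mem_Ioo hy
        exact ⟨by linarith, hv₁.le⟩
    have hlog : Tendsto (fun y => log y * log (1 + y)) (𝓝[<] 1) (𝓝 (log 1 * log (1 + 1))) :=
      ((continuousAt_log one_ne_zero).mul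
        ((continuousAt_log (by norm_num)).comp (by fun_prop))).tendsto.mono_left
        nhdsWithin_le_nhds
    have h := (hχ₁.add hχ₂).sub ((hlog.sub tendsto_log_mul_log_one_sub).div_const 2)
    simp only [legendreChi_one, sub_self, zero_div, legendreChi_zero, log_one, zero_mul,
      add_zero, sub_zero] at h
    refine h.congr fun y => ?_
    ring

lemma neg_log_one_sub_mul_div_eq (c x : ℝ) (hc : c ≠ 0) :
    -log (1 - c * x) / x = c * (-log (1 - c * x) / (c * x)) := by
  rw [← mul_div_assoc, mul_div_mul_left _ _ hc]

lemma intervalIntegrable_neg_log_one_sub_mul_div {c a b : ℝ} (ha : c * a ∈ Icc (-1:ℝ) 1)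
    (hb : c * b ∈ Icc (-1:ℝ) 1) :
    IntervalIntegrable (fun x => -log (1 - c * x) / x) volume a b := by
  rcases eq_or_ne c 0 with rfl | hc
  · simp
  have h := ((intervalIntegrable_neg_log_one_sub_div ha hb).comp_mul_left (c := c)).const_mul c
  rw [mul_div_cancel_left₀ _ hc, mul_div_cancel_left₀ _ hc] at h
  simpa only [← neg_log_one_sub_mul_div_eq c _ hc] using h

lemma integral_neg_log_one_sub_mul_div {c a b : ℝ} (ha : c * a ∈ Icc (-1:ℝ) 1)
    (hb : c * b ∈ Icc (-1:ℝ) 1) :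
    ∫ x in a..b, -log (1 - c * x) / x = dilog (c * b) - dilog (c * a) := by
  rcases eq_or_ne c 0 with rfl | hc
  · simp
  simp_rw [neg_log_one_sub_mul_div_eq c _ hc]
  rw [intervalIntegral.integral_const_mul, intervalIntegral.integral_comp_mul_left
    (fun t => -log (1 - t) / t) hc, smul_eq_mul, ← mul_assoc, mul_inv_cancel₀ hc, one_mul,
    dilog, dilog, integral_interval_sub_left
    (intervalIntegrable_neg_log_one_sub_div (by norm_num) hb)
    (intervalIntegrable_neg_log_one_sub_div (by norm_num) ha)]

lemma integral_neg_log_one_sub_mul_add_div {c k a b : ℝ} (ha₀ : 0 < a) (hb₀ : 0 < b)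
    (ha : c * a ∈ Icc (-1:ℝ) 1) (hb : c * b ∈ Icc (-1:ℝ) 1) :
    ∫ x in a..b, (-log (1 - c * x) + k) / x
      = dilog (c * b) - dilog (c * a) + k * log (b / a) := by
  have hinv : IntervalIntegrable (fun x => k * x⁻¹) volume a b := by
    refine (intervalIntegral.intervalIntegrable_inv (fun x hx => ?_) continuousOn_id).const_mul k
    rcases mem_uIcc.1 hx with ⟨h, -⟩ | ⟨h, -⟩ <;> exact ne_of_gt (by simp only [id]; linarith)
  simp_rw [add_div, div_eq_mul_inv k]
  rw [intervalIntegral.integral_add (intervalIntegrable_neg_log_one_sub_mul_div ha hb) hinv,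
    integral_neg_log_one_sub_mul_div ha hb, intervalIntegral.integral_const_mul,
    integral_inv_of_pos ha₀ hb₀]

lemma sqrt_two_sub_one_mem_Ioo : √2 - 1 ∈ Ioo (0:ℝ) 1 :=
  ⟨by linarith [one_lt_sqrt_two], by linarith [sqrt_two_lt_three_halves]⟩

lemma one_sub_inv_sqrt_two : 1 - (√2)⁻¹ = (√2 - 1) / √2 := by
  field_simp

lemma two_sub_sqrt_two : 2 - √2 = √2 * (√2 - 1) := by
  rw [mul_sub, mul_self_sqrt zero_le_two, mul_one]

lemma log_two_sub_sqrt_two : log (2 - √2) = log √2 + log (√2 - 1) := by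
  rw [two_sub_sqrt_two, log_mul (by positivity) sqrt_two_sub_one_mem_Ioo.1.ne']

lemma dilog_sqrt_two_sub_one_add_dilog_two_sub_sqrt_two :
    dilog (√2 - 1) + dilog (2 - √2) + log (√2 - 1) * (log √2 + log (√2 - 1)) = π ^ 2 / 6 := by
  have h := dilog_add_dilog_one_sub sqrt_two_sub_one_mem_Ioo
  rwa [show 1 - (√2 - 1) = 2 - √2 by ring, log_two_sub_sqrt_two] at h

lemma dilog_inv_sqrt_two_add_dilog_one_sub_inv_sqrt_two :
    dilog (√2)⁻¹ + dilog (1 - (√2)⁻¹) - log √2 * (log (√2 - 1) - log √2) = π ^ 2 / 6 := by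
  have h := dilog_add_dilog_one_sub (x := (√2)⁻¹)
    ⟨by positivity, inv_lt_one_of_one_lt₀ one_lt_sqrt_two⟩
  rwa [log_inv, one_sub_inv_sqrt_two, log_div sqrt_two_sub_one_mem_Ioo.1.ne' (by positivity),
    ← one_sub_inv_sqrt_two, neg_mul, ← sub_eq_add_neg] at h

lemma dilog_one_sub_sqrt_two_add_dilog_one_sub_inv_sqrt_two :
    dilog (1 - √2) + dilog (1 - (√2)⁻¹) + log √2 ^ 2 / 2 = 0 := by
  have h := dilog_add_dilog_div_sub_one (z := 1 - √2)
    ⟨by linarith [sqrt_two_lt_three_halves], by linarith [one_lt_sqrt_two]⟩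
  rwa [show (1 - √2) / (1 - √2 - 1) = 1 - (√2)⁻¹ by field_simp; ring, sub_sub_cancel] at h

lemma dilog_sqrt_two_sub_one_sub_dilog_one_sub_sqrt_two :
    dilog (√2 - 1) - dilog (1 - √2) = π ^ 2 / 8 - log (√2 - 1) ^ 2 / 2 := by
  have h := legendreChi_add_legendreChi_one_sub_div_one_add sqrt_two_sub_one_mem_Ioo
  rw [show (1 - (√2 - 1)) / (1 + (√2 - 1)) = √2 - 1 by
      rw [add_sub_cancel, div_eq_iff (by positivity)]; linear_combination two_sub_sqrt_two,
    add_sub_cancel, show 1 - (√2 - 1) = 2 - √2 by ring, log_two_sub_sqrt_two, legendreChi,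
    neg_sub] at h
  linear_combination h

end Real

lemma integral_returnTime_AH :
    ∫ x in (0:ℝ)..1, ∫ y in (1 - x)..1, 1 / (x * y) = π ^ 2 / 6 := by
  calc _ = ∫ x in (0:ℝ)..1, -log (1 - x) / x :=
        integral_congr_Ioo_of_le zero_le_one fun x hx => ?_
    _ = π ^ 2 / 6 := dilog_one
  have h := integral_div_mul_add_mul (x := x) (A := 0) (B := 1) (p := 1 - x) (q := 1)
    (by linarith [hx.2]) (by norm_num)
  simpa using h

lemma integral_returnTime_AE :
    ∫ x in (0:ℝ)..1, ∫ y in (1 - (2 + √2) * x)..(1 - (1 + √2) * x),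
      1 / (x * ((1 + √2) * x + y)) = π ^ 2 / 6 := by
  calc _ = ∫ x in (0:ℝ)..1, -log (1 - x) / x :=
        integral_congr_Ioo_of_le zero_le_one fun x hx => ?_
    _ = π ^ 2 / 6 := dilog_one
  have h := integral_div_mul_add_mul (x := x) (A := (1 + √2) * x) (B := 1)
    (p := 1 - (2 + √2) * x) (q := 1 - (1 + √2) * x) (by linarith [hx.2]) (by linarith)
  rw [show (1 + √2) * x + 1 * (1 - (1 + √2) * x) = 1 by ring,
    show (1 + √2) * x + 1 * (1 - (2 + √2) * x) = 1 - x by ring, log_one, zero_sub] at h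
  simpa only [one_mul] using h

lemma integral_returnTime_BD₁ :
    ∫ x in (0:ℝ)..(√2 - 1), ∫ y in (1 - (1 + √2) * x)..(1 - x), 1 / (x * (x + y))
      = dilog (2 - √2) := by
  have ha := sqrt_two_sub_one_mem_Ioo
  calc _ = ∫ x in (0:ℝ)..(√2 - 1), -log (1 - √2 * x) / x :=
        integral_congr_Ioo_of_le ha.1.le fun x hx => ?_
    _ = dilog (2 - √2) := by
      have hb : √2 * (√2 - 1) ∈ Icc (-1:ℝ) 1 := by
        rw [← two_sub_sqrt_two]
        constructor <;> linarith [one_lt_sqrt_two, sqrt_two_lt_three_halves]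
      rw [integral_neg_log_one_sub_mul_div (by simp) hb, mul_zero, dilog_zero, sub_zero,
        two_sub_sqrt_two]
  have h := integral_div_mul_add_mul (x := x) (A := x) (B := 1)
    (p := 1 - (1 + √2) * x) (q := 1 - x) ?_ (by linarith)
  · rw [show x + 1 * (1 - x) = 1 by ring,
      show x + 1 * (1 - (1 + √2) * x) = 1 - √2 * x by ring, log_one, zero_sub] at h
    simpa only [one_mul] using h
  · have : √2 * x < 2 - √2 := by
      rw [two_sub_sqrt_two]
      exact mul_lt_mul_of_pos_left hx.2 (by positivity)
    linarith [one_lt_sqrt_two]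

lemma integral_returnTime_BD₂ :
    ∫ x in (√2 - 1)..1, ∫ y in ((1 - (1 + √2) * x) / √2)..(1 - x), 1 / (x * (x + y))
      = dilog 1 - dilog (√2 - 1) - log √2 * log (√2 - 1) := by
  have ha := sqrt_two_sub_one_mem_Ioo
  calc _ = ∫ x in (√2 - 1)..1, (-log (1 - 1 * x) + log √2) / x :=
        integral_congr_Ioo_of_le ha.2.le fun x hx => ?_
    _ = _ := by
      rw [integral_neg_log_one_sub_mul_add_div ha.1 one_pos, one_div, log_inv, one_mul, one_mul]
      · ring
      · rw [one_mul]; exact ⟨by linarith [ha.1], ha.2.le⟩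
      · norm_num
  have hx₁ : 0 < 1 - x := by linarith [hx.2]
  have hlow : x + 1 * ((1 - (1 + √2) * x) / √2) = (1 - x) / √2 := by field_simp; ring
  have h := integral_div_mul_add_mul (x := x) (A := x) (B := 1)
    (p := (1 - (1 + √2) * x) / √2) (q := 1 - x) (by rw [hlow]; positivity) (by linarith)
  rw [show x + 1 * (1 - x) = 1 by ring, hlow, log_one, zero_sub,
    log_div hx₁.ne' (by positivity)] at h
  simpa only [one_mul, neg_sub', sub_neg_eq_add] using h

lemma integral_returnTime_HF :
    ∫ x in (√2 - 1)..1, ∫ y in (1 - (1 + √2) * x)..((1 - (1 + √2) * x) / √2),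
      √2 / (x * ((1 + √2) * x + √2 * y))
      = dilog (√2)⁻¹ - dilog (1 - (√2)⁻¹) + log √2 * log (√2 - 1) := by
  have ha := sqrt_two_sub_one_mem_Ioo
  have hc : 0 < (√2)⁻¹ := by positivity
  have hc₁ : (√2)⁻¹ < 1 := inv_lt_one_of_one_lt₀ one_lt_sqrt_two
  calc _ = ∫ x in (√2 - 1)..1, (-log (1 - (√2)⁻¹ * x) + -log √2) / x :=
        integral_congr_Ioo_of_le ha.2.le fun x hx => ?_
    _ = _ := by
      have hca : (√2)⁻¹ * (√2 - 1) = 1 - (√2)⁻¹ := by field_simp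
      rw [integral_neg_log_one_sub_mul_add_div ha.1 one_pos, hca, mul_one, one_div, log_inv]
      · ring
      · rw [hca]; constructor <;> linarith
      · rw [mul_one]; constructor <;> linarith
  have hupp : (1 + √2) * x + √2 * ((1 - (1 + √2) * x) / √2) = 1 := by field_simp; ring
  have hlow : (1 + √2) * x + √2 * (1 - (1 + √2) * x) = √2 * (1 - (√2)⁻¹ * x) := by
    field_simp
    linear_combination (-x) * mul_self_sqrt zero_le_two
  have hpos : 0 < 1 - (√2)⁻¹ * x := by nlinarith [hx.2]
  have h := integral_div_mul_add_mul (x := x) (A := (1 + √2) * x) (B := √2)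
    (p := 1 - (1 + √2) * x) (q := (1 - (1 + √2) * x) / √2)
    (by rw [hlow]; positivity) (by rw [hupp]; norm_num)
  rw [hupp, hlow, log_one, zero_sub, log_mul (by positivity) hpos.ne'] at h
  rw [h]
  ring

/-- The total integral of the return time function over the Poincaré section Ω equals 3π²/4,
the covolume of the Veech group Γ of 𝓛. -/
theorem total_return_time_integral :
    2 * (∫ x in (0:ℝ)..1, ∫ y in (1 - x)..1, 1 / (x * y))
      + (∫ x in (0:ℝ)..(Real.sqrt 2 - 1),
          ∫ y in (1 - (1 + Real.sqrt 2) * x)..(1 - x), 1 / (x * (x + y)))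
      + (∫ x in (Real.sqrt 2 - 1)..(1:ℝ),
          ∫ y in ((1 - (1 + Real.sqrt 2) * x) / Real.sqrt 2)..(1 - x), 1 / (x * (x + y)))
      + (∫ x in (Real.sqrt 2 - 1)..(1:ℝ),
          ∫ y in (1 - (1 + Real.sqrt 2) * x)..((1 - (1 + Real.sqrt 2) * x) / Real.sqrt 2),
            Real.sqrt 2 / (x * ((1 + Real.sqrt 2) * x + Real.sqrt 2 * y)))
      + (∫ x in (0:ℝ)..1,
          ∫ y in (1 - (2 + Real.sqrt 2) * x)..(1 - (1 + Real.sqrt 2) * x),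
            1 / (x * ((1 + Real.sqrt 2) * x + y)))
      = 3 * Real.pi ^ 2 / 4 := by
  rw [integral_returnTime_AH, integral_returnTime_BD₁, integral_returnTime_BD₂,
    integral_returnTime_HF, integral_returnTime_AE, dilog_one]
  linear_combination dilog_sqrt_two_sub_one_add_dilog_two_sub_sqrt_two
    + dilog_inv_sqrt_two_add_dilog_one_sub_inv_sqrt_two
    - 2 * dilog_one_sub_sqrt_two_add_dilog_one_sub_inv_sqrt_two
    - 2 * dilog_sqrt_two_sub_one_sub_dilog_one_sub_sqrt_two
end
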